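/- arXiv:0806.4206 — 2 statements merged into one kernel-verified Lean document; each statement's English description precedes it below -/
import Mathlib

section
/- Let (h_n) and (c_n) be decreasing sequences of positive numbers tending to 0 with 0 < h_n < π and 0 < c_n < π. Then there exists an even 2π-periodic C² function f : ℝ → ℝ such that: (1) f(0) = 0 and f is strictly increasing on [0,π]; (2) f(c_n) ≤ h_n for all n ≥ 1. -/
/-!
Write `X n = 1 - cos (c n) ∈ (0, 2]`. The monotone step function
`H u = inf ({h 0} ∪ {h m | u ≤ X m})` is positive for `u > 0` (only finitely many `X m` exceed
`u`) and satisfies `H (X n) ≤ h n`. Its threefold primitive `G` from `0` is `C²` (its second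
derivative is the continuous primitive of `H`), strictly increasing on `[0, ∞)`, and bounded by
`x³ H x`. Then `f t = G (1 - cos t) / 8` works.
-/

open Real Filter Set MeasureTheory intervalIntegral

namespace SlowStart

noncomputable def primitive (f : ℝ → ℝ) (x : ℝ) : ℝ := ∫ t in (0 : ℝ)..x, f t

section Primitive

variable {f : ℝ → ℝ}

@[simp]
lemma primitive_zero : primitive f 0 = 0 := integral_same

lemma contDiff_primitive {n : ℕ} (hf : ContDiff ℝ n f) :
    ContDiff ℝ (n + 1) (primitive f) := by
  have hderiv : ∀ x, HasDerivAt (primitive f) (f x) x := fun x =>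
    (hf.continuous.integral_hasStrictDerivAt 0 x).hasDerivAt
  refine contDiff_succ_iff_deriv.2 ⟨fun x => (hderiv x).differentiableAt, by simp, ?_⟩
  rwa [funext fun x => (hderiv x).deriv]

lemma strictMonoOn_primitive (hf : ∀ a b, IntervalIntegrable f volume a b)
    (hpos : ∀ x, 0 < x → 0 < f x) : StrictMonoOn (primitive f) (Ici 0) := by
  intro a ha b _ hab
  have hdiff : primitive f b - primitive f a = ∫ t in a..b, f t :=
    integral_interval_sub_left (hf 0 b) (hf 0 a)
  have hint_pos : 0 < ∫ t in a..b, f t :=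
    intervalIntegral_pos_of_pos_on (hf a b) (fun t ht => hpos t (lt_of_le_of_lt ha ht.1)) hab
  linarith

lemma primitive_pos (hf : ∀ a b, IntervalIntegrable f volume a b)
    (hpos : ∀ x, 0 < x → 0 < f x) {x : ℝ} (hx : 0 < x) : 0 < primitive f x := by
  simpa using strictMonoOn_primitive hf hpos self_mem_Ici hx.le hx

lemma primitive_le_mul {x : ℝ} (hx : 0 ≤ x) (hf : IntervalIntegrable f volume 0 x)
    (hmono : MonotoneOn f (Icc 0 x)) : primitive f x ≤ x * f x := by
  have := integral_mono_on hx hf intervalIntegrable_const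
    fun t ht => hmono ht (right_mem_Icc.2 hx) ht.2
  simpa [primitive] using this

end Primitive

noncomputable def stepMinorant (h X : ℕ → ℝ) (u : ℝ) : ℝ :=
  sInf (insert (h 0) (h '' {m | u ≤ X m}))

section StepMinorant

variable {h X : ℕ → ℝ}

lemma bddBelow_stepMinorant_set (hpos : ∀ n, 0 < h n) (u : ℝ) :
    BddBelow (insert (h 0) (h '' {m | u ≤ X m})) := by
  refine ⟨0, ?_⟩
  rintro x (rfl | ⟨m, -, rfl⟩) <;> exact (hpos _).le

lemma stepMinorant_le (hpos : ∀ n, 0 < h n) {u : ℝ} {n : ℕ} (hu : u ≤ X n) :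
    stepMinorant h X u ≤ h n :=
  csInf_le (bddBelow_stepMinorant_set hpos u) (mem_insert_of_mem _ ⟨n, hu, rfl⟩)

lemma monotone_stepMinorant (hpos : ∀ n, 0 < h n) : Monotone (stepMinorant h X) :=
  fun _ _ huv => csInf_le_csInf (bddBelow_stepMinorant_set hpos _) (insert_nonempty _ _)
    (insert_subset_insert (image_mono fun _ hm => huv.trans hm))

lemma stepMinorant_pos (hpos : ∀ n, 0 < h n) (hX : Tendsto X atTop (nhds 0)) {u : ℝ}
    (hu : 0 < u) : 0 < stepMinorant h X u := by
  have hfin : {m | u ≤ X m}.Finite := by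
    obtain ⟨N, hN⟩ := (hX.eventually (eventually_lt_nhds hu)).exists_forall_of_atTop
    exact (finite_Iio N).subset fun m hm => lt_of_not_ge fun hNm => (hN m hNm).not_ge hm
  obtain hm | ⟨m, -, hm⟩ := (insert_nonempty _ _).csInf_mem ((hfin.image h).insert (h 0))
  · rw [stepMinorant, hm]; exact hpos 0
  · rw [stepMinorant, ← hm]; exact hpos m

variable (hpos : ∀ n, 0 < h n) (hX : Tendsto X atTop (nhds 0))
include hpos

lemma intervalIntegrable_stepMinorant (a b : ℝ) :
    IntervalIntegrable (stepMinorant h X) volume a b :=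
  (monotone_stepMinorant hpos).intervalIntegrable

lemma continuous_primitive_stepMinorant : Continuous (primitive (stepMinorant h X)) :=
  continuous_primitive (intervalIntegrable_stepMinorant hpos) 0

lemma contDiff_primitive_two_stepMinorant :
    ContDiff ℝ 1 (primitive (primitive (stepMinorant h X))) :=
  contDiff_primitive (n := 0) (contDiff_zero.2 (continuous_primitive_stepMinorant hpos))

lemma contDiff_primitive_three_stepMinorant :
    ContDiff ℝ 2 (primitive (primitive (primitive (stepMinorant h X)))) :=
  contDiff_primitive (n := 1) (contDiff_primitive_two_stepMinorant hpos)

include hX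

lemma strictMonoOn_primitive_stepMinorant :
    StrictMonoOn (primitive (stepMinorant h X)) (Ici 0) :=
  strictMonoOn_primitive (intervalIntegrable_stepMinorant hpos) fun _ => stepMinorant_pos hpos hX

lemma strictMonoOn_primitive_two_stepMinorant :
    StrictMonoOn (primitive (primitive (stepMinorant h X))) (Ici 0) :=
  strictMonoOn_primitive (continuous_primitive_stepMinorant hpos).intervalIntegrable
    fun _ => primitive_pos (intervalIntegrable_stepMinorant hpos) fun _ => stepMinorant_pos hpos hX

lemma strictMonoOn_primitive_three_stepMinorant :
    StrictMonoOn (primitive (primitive (primitive (stepMinorant h X)))) (Ici 0) :=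
  strictMonoOn_primitive (contDiff_primitive_two_stepMinorant hpos).continuous.intervalIntegrable
    fun _ hx => by
      simpa using strictMonoOn_primitive_two_stepMinorant hpos hX self_mem_Ici hx.le hx

lemma primitive_three_stepMinorant_le {x : ℝ} (hx : 0 ≤ x) :
    primitive (primitive (primitive (stepMinorant h X))) x ≤ x ^ 3 * stepMinorant h X x := by
  have hA := primitive_le_mul hx (intervalIntegrable_stepMinorant (X := X) hpos 0 x)
    ((monotone_stepMinorant hpos).monotoneOn _)
  have hB := primitive_le_mul hx
    ((continuous_primitive_stepMinorant (X := X) hpos).intervalIntegrable 0 x)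
    ((strictMonoOn_primitive_stepMinorant hpos hX).monotoneOn.mono Icc_subset_Ici_self)
  have hG := primitive_le_mul hx
    ((contDiff_primitive_two_stepMinorant (X := X) hpos).continuous.intervalIntegrable 0 x)
    ((strictMonoOn_primitive_two_stepMinorant hpos hX).monotoneOn.mono Icc_subset_Ici_self)
  calc _ ≤ x * primitive (primitive (stepMinorant h X)) x := hG
    _ ≤ x * (x * primitive (stepMinorant h X) x) := mul_le_mul_of_nonneg_left hB hx
    _ ≤ x * (x * (x * stepMinorant h X x)) :=
        mul_le_mul_of_nonneg_left (mul_le_mul_of_nonneg_left hA hx) hx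
    _ = x ^ 3 * stepMinorant h X x := by ring

end StepMinorant

lemma strictMonoOn_one_sub_cos : StrictMonoOn (fun t => 1 - cos t) (Icc 0 π) :=
  fun _ ha _ hb hab => sub_lt_sub_left (strictAntiOn_cos ha hb hab) 1

end SlowStart

open SlowStart

theorem stmt_1_general (h c : ℕ → ℝ)
    (hhb : ∀ n, 0 < h n ∧ h n < π) (hcb : ∀ n, 0 < c n ∧ c n < π)
    (hclim : Tendsto c atTop (nhds 0)) :
    ∃ f : ℝ → ℝ, ContDiff ℝ 2 f ∧ (∀ t, f (-t) = f t) ∧ (∀ t, f (t + 2 * π) = f t) ∧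
      f 0 = 0 ∧ StrictMonoOn f (Set.Icc 0 π) ∧ ∀ n : ℕ, 1 ≤ n → f (c n) ≤ h n := by
  set X : ℕ → ℝ := fun n => 1 - cos (c n)
  set G := primitive (primitive (primitive (stepMinorant h X)))
  have hpos : ∀ n, 0 < h n := fun n => (hhb n).1
  have hX : Tendsto X atTop (nhds 0) := by
    simpa using (tendsto_const_nhds (x := (1 : ℝ))).sub ((continuous_cos.tendsto 0).comp hclim)
  have hXpos : ∀ n, 0 < X n := fun n => by
    simpa [X] using
      strictMonoOn_one_sub_cos ⟨le_rfl, pi_pos.le⟩ ⟨(hcb n).1.le, (hcb n).2.le⟩ (hcb n).1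
  have hcos_nonneg : ∀ t, 0 ≤ 1 - cos t := fun t => sub_nonneg.2 (cos_le_one t)
  refine ⟨fun t => G (1 - cos t) / 8, ?_, fun t => by simp only [cos_neg],
    fun t => by simp only [cos_add_two_pi], by simp [G], fun a ha b hb hab => ?_, fun n _ => ?_⟩
  · exact ((contDiff_primitive_three_stepMinorant hpos).comp
      (contDiff_const.sub contDiff_cos)).div_const 8
  · exact div_lt_div_of_pos_right (strictMonoOn_primitive_three_stepMinorant hpos hX
      (hcos_nonneg a) (hcos_nonneg b) (strictMonoOn_one_sub_cos ha hb hab)) (by norm_num)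
  · have hX_le_two : X n ≤ 2 := by linarith [neg_one_le_cos (c n)]
    calc G (X n) / 8 ≤ X n ^ 3 * stepMinorant h X (X n) / 8 := by
          gcongr; exact primitive_three_stepMinorant_le hpos hX (hXpos n).le
      _ ≤ 2 ^ 3 * h n / 8 := by
          have hH_nonneg := (stepMinorant_pos hpos hX (hXpos n)).le
          have hX_nonneg := (hXpos n).le
          gcongr
          exact stepMinorant_le hpos le_rfl
      _ = h n := by ring

theorem stmt_1 (h c : ℕ → ℝ)
    (hh : Antitone h) (hc : Antitone c)
    (hhb : ∀ n, 0 < h n ∧ h n < π) (hcb : ∀ n, 0 < c n ∧ c n < π)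
    (hhlim : Tendsto h atTop (nhds 0)) (hclim : Tendsto c atTop (nhds 0)) :
    ∃ f : ℝ → ℝ, ContDiff ℝ 2 f ∧ (∀ t, f (-t) = f t) ∧ (∀ t, f (t + 2 * π) = f t) ∧
      f 0 = 0 ∧ StrictMonoOn f (Set.Icc 0 π) ∧ ∀ n : ℕ, 1 ≤ n → f (c n) ≤ h n :=
  stmt_1_general h c hhb hcb hclim
end

section
/- Let Ψ be an Orlicz function, θ > 0, and suppose that for A > 1 and u ≥ u₀ one has Ψ(Au) ≤ Ψ(u)(log Ψ(u))^θ, with Ψ(u₀) ≥ e². Set p_n = Ψ(Aⁿ) and l_n = log p_n. Then for n large, l_{n+1} ≤ l_n + θ log l_n, and moreover l_n ≥ n log A; combining these, log Ψ(Aⁿ) = O(n log n) as n → ∞. -/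
/-!
Taking logarithms in `Ψ(Aⁿ⁺¹) ≤ Ψ(Aⁿ) (log Ψ(Aⁿ))^θ` gives `lₙ₊₁ ≤ lₙ + θ log lₙ`, and
`Ψ(x) ≥ x` gives `lₙ ≥ log Aⁿ = n log A`. The recurrence alone forces `lₙ = O(n log n)`: if
`lₙ ≤ C n log n`, then `θ log lₙ ≤ θ (log C + 2 log n) ≤ C log n` as soon as `√C ≥ 4θ`, so the
bound propagates from `n` to `n + 1`.
-/

open Real Filter

theorem log_le_log_add_mul_log_log {p q θ : ℝ} (hp : 1 < p) (hq : 0 < q)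
    (h : q ≤ p * log p ^ θ) : log q ≤ log p + θ * log (log p) := by
  have hlogp : 0 < log p := log_pos hp
  calc log q ≤ log (p * log p ^ θ) := log_le_log hq h
    _ = log p + θ * log (log p) := by
      rw [log_mul (by linarith) (rpow_pos_of_pos hlogp θ).ne', log_rpow hlogp]

theorem mul_log_le_half_self {θ C : ℝ} (hθ : 0 ≤ θ) (hC : 0 ≤ C) (hθC : 4 * θ ≤ √C) :
    θ * log C ≤ C / 2 := by
  have hlog : log C ≤ 2 * √C := by
    have := log_le_self (sqrt_nonneg C)
    rw [log_sqrt hC] at this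
    linarith
  calc θ * log C ≤ θ * (2 * √C) := mul_le_mul_of_nonneg_left hlog hθ
    _ ≤ √C / 4 * (2 * √C) := by gcongr; linarith
    _ = C / 2 := by rw [show √C / 4 * (2 * √C) = √C ^ 2 / 2 by ring, sq_sqrt hC]

theorem mul_log_mul_mul_log_le {θ C t : ℝ} (hθ : 0 ≤ θ) (hC : 1 ≤ C) (hθC : 4 * θ ≤ √C)
    (ht : exp 1 ≤ t) : θ * log (C * t * log t) ≤ C * log t := by
  have ht0 : 0 < t := (exp_pos 1).trans_le ht
  have hlogt : 1 ≤ log t := (le_log_iff_exp_le ht0).mpr ht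
  have hθC' : 4 * θ ≤ C := hθC.trans (sqrt_le_self_iff.mpr (Or.inr hC))
  have hloglog : log (log t) ≤ log t := log_le_self (by linarith)
  have hlogC : θ * log C ≤ C / 2 * log t := by
    nlinarith [mul_log_le_half_self hθ (by linarith) hθC]
  rw [log_mul (by positivity) (by positivity), log_mul (by positivity) (by positivity)]
  nlinarith

theorem add_mul_log_le_mul_succ_mul_log_succ {θ C t x : ℝ} (hθ : 0 ≤ θ) (hC : 1 ≤ C)
    (hθC : 4 * θ ≤ √C) (ht : exp 1 ≤ t) (hx : 0 < x) (hxt : x ≤ C * t * log t) :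
    x + θ * log x ≤ C * (t + 1) * log (t + 1) := by
  have ht0 : 0 < t := (exp_pos 1).trans_le ht
  have hlog : log t ≤ log (t + 1) := log_le_log ht0 (by linarith)
  calc x + θ * log x ≤ C * t * log t + θ * log (C * t * log t) :=
        add_le_add hxt (mul_le_mul_of_nonneg_left (log_le_log hx hxt) hθ)
    _ ≤ C * t * log t + C * log t := by grw [mul_log_mul_mul_log_le hθ hC hθC ht]
    _ = C * (t + 1) * log t := by ring
    _ ≤ C * (t + 1) * log (t + 1) := by gcongr

theorem exists_le_mul_mul_log_of_le_add_mul_log {l : ℕ → ℝ} {θ : ℝ} (hθ : 0 ≤ θ)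
    (hpos : ∀ᶠ n in atTop, 0 < l n)
    (hrec : ∀ᶠ n in atTop, l (n + 1) ≤ l n + θ * log (l n)) :
    ∃ C, ∀ᶠ n : ℕ in atTop, l n ≤ C * n * log n := by
  obtain ⟨N, hN⟩ := eventually_atTop.mp <| hpos.and <| hrec.and <|
    tendsto_natCast_atTop_atTop.eventually_ge_atTop (exp 1)
  set C := max (max 1 ((4 * θ) ^ 2)) (l N)
  have hC : 1 ≤ C := (le_max_left _ _).trans (le_max_left _ _)
  have hθC : 4 * θ ≤ √C := by
    rw [← sqrt_sq (by positivity : 0 ≤ 4 * θ)]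
    exact sqrt_le_sqrt ((le_max_right _ _).trans (le_max_left _ _))
  refine ⟨C, eventually_atTop.mpr ⟨N, fun n hn => ?_⟩⟩
  induction n, hn using Nat.le_induction with
  | base =>
    have hN1 : 1 ≤ (N : ℝ) := (one_le_exp zero_le_one).trans (hN N le_rfl).2.2
    have hlogN : 1 ≤ log N := (le_log_iff_exp_le (by linarith)).mpr (hN N le_rfl).2.2
    calc l N ≤ C := le_max_right _ _
      _ = C * 1 * 1 := by ring
      _ ≤ C * N * log N := by gcongr
  | succ n hn ih =>
    obtain ⟨hn_pos, hn_rec, hn_exp⟩ := hN n hn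
    push_cast
    exact hn_rec.trans (add_mul_log_le_mul_succ_mul_log_succ hθ hC hθC hn_exp hn_pos ih)

theorem stmt_16_general (Ψ : ℝ → ℝ)
    (hgex : ∃ x₁ : ℝ, ∀ x ≥ x₁, x ≤ Ψ x)
    (A θ u₀ : ℝ) (hA : 1 < A) (hθ : 0 < θ)
    (hbound : ∀ u ≥ u₀, Ψ (A * u) ≤ Ψ u * (Real.log (Ψ u)) ^ θ)
    (l : ℕ → ℝ) (hl : ∀ n, l n = Real.log (Ψ (A ^ n))) :
    (∃ n₁ : ℕ, ∀ n ≥ n₁, l (n + 1) ≤ l n + θ * Real.log (l n)) ∧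
    (∃ n₂ : ℕ, ∀ n ≥ n₂, (n : ℝ) * Real.log A ≤ l n) ∧
    (∃ C : ℝ, ∃ n₃ : ℕ, ∀ n ≥ n₃, l n ≤ C * (n : ℝ) * Real.log n) := by
  obtain ⟨x₁, hx₁⟩ := hgex
  have hAn := tendsto_pow_atTop_atTop_of_one_lt hA
  have hlarge : ∀ᶠ n : ℕ in atTop, u₀ ≤ A ^ n ∧ 1 < Ψ (A ^ n) ∧ log (A ^ n) ≤ l n := by
    filter_upwards [hAn.eventually_ge_atTop (max x₁ u₀), hAn.eventually_gt_atTop 1]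
      with n hn hn1
    have hΨn : A ^ n ≤ Ψ (A ^ n) := hx₁ _ (le_of_max_le_left hn)
    exact ⟨le_of_max_le_right hn, hn1.trans_le hΨn, hl n ▸ log_le_log (by linarith) hΨn⟩
  have hrec : ∀ᶠ n in atTop, l (n + 1) ≤ l n + θ * log (l n) := by
    filter_upwards [hlarge, (tendsto_add_atTop_nat 1).eventually hlarge]
      with n ⟨hu₀, hΨn, _⟩ ⟨_, hΨn1, _⟩
    rw [pow_succ'] at hΨn1
    rw [hl, hl, pow_succ']
    exact log_le_log_add_mul_log_log hΨn (by linarith) (hbound _ hu₀)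
  have hlower : ∀ᶠ n : ℕ in atTop, n * log A ≤ l n := by
    filter_upwards [hlarge] with n ⟨_, _, hlog⟩
    rwa [← log_pow]
  have hpos : ∀ᶠ n in atTop, 0 < l n := by
    filter_upwards [hlarge] with n ⟨_, hΨn, _⟩
    exact hl n ▸ log_pos hΨn
  obtain ⟨C, hC⟩ := exists_le_mul_mul_log_of_le_add_mul_log hθ.le hpos hrec
  exact ⟨eventually_atTop.mp hrec, eventually_atTop.mp hlower, C, eventually_atTop.mp hC⟩

theorem stmt_16 (Ψ : ℝ → ℝ) (hconv : ConvexOn ℝ (Set.Ici 0) Ψ)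
    (hmono : MonotoneOn Ψ (Set.Ici 0)) (hΨ0 : Ψ 0 = 0)
    (hgex : ∃ x₁ : ℝ, ∀ x ≥ x₁, x ≤ Ψ x)
    (A θ u₀ : ℝ) (hA : 1 < A) (hθ : 0 < θ)
    (hbound : ∀ u ≥ u₀, Ψ (A * u) ≤ Ψ u * (Real.log (Ψ u)) ^ θ)
    (hΨu₀ : Real.exp 2 ≤ Ψ u₀)
    (l : ℕ → ℝ) (hl : ∀ n, l n = Real.log (Ψ (A ^ n))) :
    (∃ n₁ : ℕ, ∀ n ≥ n₁, l (n + 1) ≤ l n + θ * Real.log (l n)) ∧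
    (∃ n₂ : ℕ, ∀ n ≥ n₂, (n : ℝ) * Real.log A ≤ l n) ∧
    (∃ C : ℝ, ∃ n₃ : ℕ, ∀ n ≥ n₃, l n ≤ C * (n : ℝ) * Real.log n) :=
  stmt_16_general Ψ hgex A θ u₀ hA hθ hbound l hl
end
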